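/- arXiv:2012.02928 — 5 statements merged into one kernel-verified Lean document; each statement's English description precedes it below -/
import Mathlib

section
/- Let K and M be closed subspaces of a complex Hilbert space E. Then the orthogonal projections P_K and P_M commute (P_K ∘ P_M = P_M ∘ P_K) if and only if K = (K ⊓ M) ⊔ (K ⊓ Mᗮ). -/
/-!
An idempotent `f` leaves a submodule `p` invariant exactly when `p` splits as
`(p ⊓ range f) ⊔ (p ⊓ ker f)`, via `x = f x + (x - f x)`. The projection `P_K` commutes with
`P_M` iff `P_M` leaves both `K = range P_K` and `Kᗮ = ker P_K` invariant, and since `P_M` is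
self-adjoint the invariance of `K` already implies that of `Kᗮ`.
-/

variable {E : Type*} [NormedAddCommGroup E] [InnerProductSpace ℂ E] [CompleteSpace E]

/-- Orthogonal projection onto (the topological closure of) a submodule, as a
continuous linear operator on `E`. For a closed subspace `K` this is the
orthogonal projection `P_K` onto `K` itself. -/
noncomputable def proj (K : Submodule ℂ E) : E →L[ℂ] E :=
  K.topologicalClosure.subtypeL.comp K.topologicalClosure.orthogonalProjectionOnto

namespace LinearMap.IsIdempotentElem

variable {R V : Type*} [Ring R] [AddCommGroup V] [Module R V] {f : Module.End R V}

theorem mem_invtSubmodule_iff_eq_inf_range_sup_inf_ker (hf : IsIdempotentElem f)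
    (p : Submodule R V) :
    p ∈ f.invtSubmodule ↔ p = p ⊓ range f ⊔ p ⊓ ker f := by
  refine ⟨fun hp => le_antisymm (fun x hx => ?_) (sup_le inf_le_left inf_le_left), fun hp => ?_⟩
  · have hfx : f x ∈ p := hp hx
    have hker : x - f x ∈ ker f := by
      rw [mem_ker, map_sub, ← Module.End.mul_apply, hf.eq, sub_self]
    simpa using Submodule.add_mem_sup (Submodule.mem_inf.2 ⟨hfx, mem_range_self f x⟩)
      (Submodule.mem_inf.2 ⟨p.sub_mem hx hfx, hker⟩)
  · intro x hx
    rw [hp] at hx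
    obtain ⟨_, ⟨hap, a, rfl⟩, b, ⟨-, hb⟩, rfl⟩ := Submodule.mem_sup.1 hx
    have hfab : f (f a + b) = f a := by
      rw [map_add, mem_ker.1 hb, add_zero, ← Module.End.mul_apply, hf.eq]
    rw [Submodule.mem_comap, hfab]
    exact hap

end LinearMap.IsIdempotentElem

namespace Submodule

variable {𝕜 F : Type*} [RCLike 𝕜] [NormedAddCommGroup F] [InnerProductSpace 𝕜 F]

theorem commute_starProjection_iff_mem_invtSubmodule (K M : Submodule 𝕜 F)
    [K.HasOrthogonalProjection] [M.HasOrthogonalProjection] :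
    Commute K.starProjection M.starProjection ↔
      K ∈ Module.End.invtSubmodule (M.starProjection : F →ₗ[𝕜] F) := by
  rw [ContinuousLinearMap.IsIdempotentElem.commute_iff K.isIdempotentElem_starProjection,
    range_starProjection, ker_starProjection]
  exact ⟨And.left, fun h =>
    ⟨h, M.starProjection_isSymmetric.orthogonalComplement_mem_invtSubmodule h⟩⟩

theorem mem_invtSubmodule_starProjection_iff (K M : Submodule 𝕜 F) [M.HasOrthogonalProjection] :
    K ∈ Module.End.invtSubmodule (M.starProjection : F →ₗ[𝕜] F) ↔ K = K ⊓ M ⊔ K ⊓ Mᗮ := by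
  rw [LinearMap.IsIdempotentElem.mem_invtSubmodule_iff_eq_inf_range_sup_inf_ker
    (ContinuousLinearMap.IsIdempotentElem.toLinearMap M.isIdempotentElem_starProjection),
    range_starProjection, ker_starProjection]

theorem commute_starProjection_iff (K M : Submodule 𝕜 F)
    [K.HasOrthogonalProjection] [M.HasOrthogonalProjection] :
    Commute K.starProjection M.starProjection ↔ K = K ⊓ M ⊔ K ⊓ Mᗮ :=
  (K.commute_starProjection_iff_mem_invtSubmodule M).trans
    (K.mem_invtSubmodule_starProjection_iff M)

end Submodule

theorem proj_eq_starProjection {K : Submodule ℂ E} (hK : IsClosed (K : Set E))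
    [K.HasOrthogonalProjection] : proj K = K.starProjection := by
  change K.topologicalClosure.starProjection = _
  congr!
  exact hK.submodule_topologicalClosure_eq

theorem stmt0 (K M : Submodule ℂ E) (hK : IsClosed (K : Set E)) (hM : IsClosed (M : Set E)) :
    proj K ∘L proj M = proj M ∘L proj K ↔ K = (K ⊓ M) ⊔ (K ⊓ Mᗮ) := by
  have := hK.completeSpace_coe
  have := hM.completeSpace_coe
  rw [proj_eq_starProjection hK, proj_eq_starProjection hM]
  exact K.commute_starProjection_iff M
end

section
/- Let K and M be closed subspaces of a complex Hilbert space E, and define the contrapositive Sasaki conditional K ⇒_C M := (K ⊔ M)ᗮ ⊔ M. Then it satisfies the minimum implicative conditions: (E) K ⇒_C M = ⊤ if and only if K ≤ M; (MP) K ⊓ (K ⇒_C M) ≤ M; (MT) Mᗮ ⊓ (K ⇒_C M) ≤ Kᗮ. -/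
/-! Everything follows from the modular law in the lattice of submodules together with
`N ⊓ Nᗮ = ⊥`: for `M ≤ N` it gives `N ⊓ (Nᗮ ⊔ M) = M` and `Mᗮ ⊓ (Nᗮ ⊔ M) = Nᗮ`, and with
`N = K ⊔ M` these are (MP) and (MT). Only `cSasaki K M = ⊤` for `K ≤ M` needs completeness,
through `M ⊔ Mᗮ = ⊤`. -/

variable {E : Type*} [NormedAddCommGroup E] [InnerProductSpace ℂ E] [CompleteSpace E]

/-- The contrapositive Sasaki conditional `K ⇒_C M := (K ⊔ M)ᗮ ⊔ M`. -/
noncomputable def cSasaki (K M : Submodule ℂ E) : Submodule ℂ E :=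
  (K ⊔ M)ᗮ ⊔ M

namespace Submodule

variable {𝕜 F : Type*} [RCLike 𝕜] [NormedAddCommGroup F] [InnerProductSpace 𝕜 F]
  {M N : Submodule 𝕜 F}

theorem inf_orthogonal_sup_eq_of_le (h : M ≤ N) : N ⊓ (Nᗮ ⊔ M) = M := by
  rw [inf_comm, sup_comm, sup_inf_assoc_of_le _ h, inf_comm, inf_orthogonal_eq_bot, sup_bot_eq]

theorem orthogonal_inf_orthogonal_sup_eq_of_le (h : M ≤ N) : Mᗮ ⊓ (Nᗮ ⊔ M) = Nᗮ := by
  rw [inf_comm, sup_inf_assoc_of_le _ (orthogonal_le h), inf_orthogonal_eq_bot, sup_bot_eq]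

end Submodule

omit [CompleteSpace E] in
theorem inf_cSasaki_le (K M : Submodule ℂ E) : K ⊓ cSasaki K M ≤ M :=
  calc K ⊓ cSasaki K M ≤ (K ⊔ M) ⊓ cSasaki K M := inf_le_inf_right _ le_sup_left
    _ = M := Submodule.inf_orthogonal_sup_eq_of_le le_sup_right

omit [CompleteSpace E] in
theorem orthogonal_inf_cSasaki_le (K M : Submodule ℂ E) : Mᗮ ⊓ cSasaki K M ≤ Kᗮ := by
  rw [cSasaki, Submodule.orthogonal_inf_orthogonal_sup_eq_of_le le_sup_right]
  exact Submodule.orthogonal_le le_sup_left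

theorem cSasaki_eq_top_iff {K M : Submodule ℂ E} (hM : IsClosed (M : Set E)) :
    cSasaki K M = ⊤ ↔ K ≤ M := by
  have : CompleteSpace M := hM.completeSpace_coe
  refine ⟨fun h => ?_, fun h => ?_⟩
  · simpa [h] using inf_cSasaki_le K M
  · rw [cSasaki, sup_eq_right.2 h, sup_comm]
    exact Submodule.sup_orthogonal_of_hasOrthogonalProjection

theorem stmt7_general (K M : Submodule ℂ E) (hM : IsClosed (M : Set E)) :
    (cSasaki K M = ⊤ ↔ K ≤ M) ∧ K ⊓ cSasaki K M ≤ M ∧ Mᗮ ⊓ cSasaki K M ≤ Kᗮ :=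
  ⟨cSasaki_eq_top_iff hM, inf_cSasaki_le K M, orthogonal_inf_cSasaki_le K M⟩

theorem stmt7 (K M : Submodule ℂ E) (hK : IsClosed (K : Set E)) (hM : IsClosed (M : Set E)) :
    (cSasaki K M = ⊤ ↔ K ≤ M) ∧ K ⊓ cSasaki K M ≤ M ∧ Mᗮ ⊓ cSasaki K M ≤ Kᗮ :=
  stmt7_general K M hM
end

section
/- Let K and M be closed subspaces of a complex Hilbert space E, and define the relevance conditional K ⇒_R M := (K ⊓ M) ⊔ (Kᗮ ⊓ M) ⊔ (Kᗮ ⊓ Mᗮ). Then it satisfies the minimum implicative conditions: (E) K ⇒_R M = ⊤ if and only if K ≤ M; (MP) K ⊓ (K ⇒_R M) ≤ M; (MT) Mᗮ ⊓ (K ⇒_R M) ≤ Kᗮ. -/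
/-! Modus ponens and modus tollens are pure lattice facts: the conditional lies below
`(K ⊓ M) ⊔ Kᗮ` and below `(Kᗮ ⊓ Mᗮ) ⊔ M`, and modularity together with `K ⊓ Kᗮ = ⊥` cuts these
down to `K ⊓ M` and `Kᗮ ⊓ Mᗮ`. For the converse half of (E), the orthomodular law
`K ⊔ (Kᗮ ⊓ M) = M` for closed `K ≤ M` collapses the conditional to `M ⊔ Mᗮ = ⊤`. -/

variable {E : Type*} [NormedAddCommGroup E] [InnerProductSpace ℂ E] [CompleteSpace E]

/-- The relevance conditional `K ⇒_R M := (K ⊓ M) ⊔ (Kᗮ ⊓ M) ⊔ (Kᗮ ⊓ Mᗮ)`. -/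
noncomputable def rSasaki (K M : Submodule ℂ E) : Submodule ℂ E :=
  (K ⊓ M) ⊔ (Kᗮ ⊓ M) ⊔ (Kᗮ ⊓ Mᗮ)

section

omit [CompleteSpace E]

variable (K M : Submodule ℂ E)

theorem rSasaki_le_inf_sup_orthogonal : rSasaki K M ≤ (K ⊓ M) ⊔ Kᗮ :=
  sup_le (sup_le le_sup_left (le_sup_of_le_right inf_le_left)) (le_sup_of_le_right inf_le_left)

theorem rSasaki_le_inf_orthogonal_sup : rSasaki K M ≤ (Kᗮ ⊓ Mᗮ) ⊔ M :=
  sup_le (sup_le (le_sup_of_le_right inf_le_right) (le_sup_of_le_right inf_le_right)) le_sup_left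

theorem inf_rSasaki_le : K ⊓ rSasaki K M ≤ M :=
  calc K ⊓ rSasaki K M ≤ K ⊓ ((K ⊓ M) ⊔ Kᗮ) :=
        inf_le_inf_left K (rSasaki_le_inf_sup_orthogonal K M)
    _ = K ⊓ M := by
        rw [inf_comm, sup_inf_assoc_of_le _ inf_le_left, inf_comm Kᗮ, K.inf_orthogonal_eq_bot,
          sup_bot_eq]
    _ ≤ M := inf_le_right

theorem orthogonal_inf_rSasaki_le : Mᗮ ⊓ rSasaki K M ≤ Kᗮ :=
  calc Mᗮ ⊓ rSasaki K M ≤ Mᗮ ⊓ ((Kᗮ ⊓ Mᗮ) ⊔ M) :=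
        inf_le_inf_left Mᗮ (rSasaki_le_inf_orthogonal_sup K M)
    _ = Kᗮ ⊓ Mᗮ := by
        rw [inf_comm, sup_inf_assoc_of_le _ inf_le_right, M.inf_orthogonal_eq_bot, sup_bot_eq]
    _ ≤ Kᗮ := inf_le_left

theorem le_of_rSasaki_eq_top (h : rSasaki K M = ⊤) : K ≤ M := by
  simpa [h] using inf_rSasaki_le K M

end

omit [CompleteSpace E] in
theorem rSasaki_eq_top_of_le {K M : Submodule ℂ E} [K.HasOrthogonalProjection]
    [M.HasOrthogonalProjection] (h : K ≤ M) : rSasaki K M = ⊤ := by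
  rw [rSasaki, inf_eq_left.2 h, Submodule.sup_orthogonal_inf_of_hasOrthogonalProjection h,
    inf_eq_right.2 (Submodule.orthogonal_le h), M.sup_orthogonal_of_hasOrthogonalProjection]

theorem stmt8 (K M : Submodule ℂ E) (hK : IsClosed (K : Set E)) (hM : IsClosed (M : Set E)) :
    (rSasaki K M = ⊤ ↔ K ≤ M) ∧ K ⊓ rSasaki K M ≤ M ∧ Mᗮ ⊓ rSasaki K M ≤ Kᗮ := by
  have : CompleteSpace K := hK.completeSpace_coe
  have : CompleteSpace M := hM.completeSpace_coe
  exact ⟨⟨le_of_rSasaki_eq_top K M, rSasaki_eq_top_of_le⟩, inf_rSasaki_le K M,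
    orthogonal_inf_rSasaki_le K M⟩
end

section
/- Let K and M be closed subspaces of a complex Hilbert space E. Then the Sasaki arrow admits the four-term decomposition K ⇒ M = (K ⊓ M) ⊔ (Kᗮ ⊓ M) ⊔ (Kᗮ ⊓ Mᗮ) ⊔ (Kᗮ ⊓ com(K, M)ᗮ). -/
/-! The two summands `Kᗮ ⊓ M` and `Kᗮ ⊓ Mᗮ` are orthogonal closed subspaces of `Kᗮ`, so `Kᗮ`
splits as their sum plus the part of `Kᗮ` orthogonal to both. That remainder is
`Kᗮ ⊓ com(K, M)ᗮ`, since the other two terms of `com(K, M)` lie in `K` and are thus orthogonal to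
`Kᗮ` anyway. Adding `K ⊓ M` to this splitting of `Kᗮ` gives the Sasaki arrow. -/

variable {E : Type*} [NormedAddCommGroup E] [InnerProductSpace ℂ E] [CompleteSpace E]

/-- The commutator `com(K, M)` of two subspaces. -/
noncomputable def com (K M : Submodule ℂ E) : Submodule ℂ E :=
  (K ⊓ M) ⊔ (K ⊓ Mᗮ) ⊔ (Kᗮ ⊓ M) ⊔ (Kᗮ ⊓ Mᗮ)


/-- The Sasaki arrow `K ⇒ M`. -/
noncomputable def sasaki (K M : Submodule ℂ E) : Submodule ℂ E :=
  Kᗮ ⊔ (K ⊓ M)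

namespace Submodule

variable {𝕜 F : Type*} [RCLike 𝕜] [NormedAddCommGroup F] [InnerProductSpace 𝕜 F]

theorem sup_sup_inf_orthogonal_inf_orthogonal {A₁ A₂ B : Submodule 𝕜 F}
    [A₁.HasOrthogonalProjection] [A₂.HasOrthogonalProjection]
    (h₁ : A₁ ≤ B) (h₂ : A₂ ≤ B) (h : A₁ ⟂ A₂) :
    A₁ ⊔ A₂ ⊔ (B ⊓ A₁ᗮ ⊓ A₂ᗮ) = B := by
  have hA₂ : A₂ ≤ A₁ᗮ ⊓ B := le_inf h.symm.le h₂
  calc A₁ ⊔ A₂ ⊔ (B ⊓ A₁ᗮ ⊓ A₂ᗮ) = A₁ ⊔ (A₂ ⊔ A₂ᗮ ⊓ (A₁ᗮ ⊓ B)) := by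
        rw [sup_assoc, inf_comm B, inf_comm]
    _ = B := by
        rw [sup_orthogonal_inf_of_hasOrthogonalProjection hA₂,
          sup_orthogonal_inf_of_hasOrthogonalProjection h₁]

end Submodule

theorem orthogonal_inf_orthogonal_com {F : Type*} [NormedAddCommGroup F] [InnerProductSpace ℂ F]
    (K M : Submodule ℂ F) :
    Kᗮ ⊓ (com K M)ᗮ = Kᗮ ⊓ (Kᗮ ⊓ M)ᗮ ⊓ (Kᗮ ⊓ Mᗮ)ᗮ := by
  have hKM : Kᗮ ≤ (K ⊓ M)ᗮ := Submodule.orthogonal_le inf_le_left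
  have hKM' : Kᗮ ≤ (K ⊓ Mᗮ)ᗮ := Submodule.orthogonal_le inf_le_left
  simp only [com, ← Submodule.inf_orthogonal, ← inf_assoc, inf_of_le_left hKM,
    inf_of_le_left hKM']

theorem stmt9_general (K M : Submodule ℂ E) (hM : IsClosed (M : Set E)) :
    sasaki K M = (K ⊓ M) ⊔ (Kᗮ ⊓ M) ⊔ (Kᗮ ⊓ Mᗮ) ⊔ (Kᗮ ⊓ (com K M)ᗮ) := by
  have : CompleteSpace (Kᗮ ⊓ M : Submodule ℂ E) :=
    (K.isClosed_orthogonal.inter hM).completeSpace_coe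
  have : CompleteSpace (Kᗮ ⊓ Mᗮ : Submodule ℂ E) :=
    (K.isClosed_orthogonal.inter M.isClosed_orthogonal).completeSpace_coe
  have hsplit := Submodule.sup_sup_inf_orthogonal_inf_orthogonal (inf_le_left : Kᗮ ⊓ M ≤ Kᗮ)
    inf_le_left (M.isOrtho_orthogonal_right.mono inf_le_right inf_le_right)
  rw [sasaki, orthogonal_inf_orthogonal_com]
  nth_rw 1 [← hsplit]
  ac_rfl

theorem stmt9 (K M : Submodule ℂ E) (hK : IsClosed (K : Set E)) (hM : IsClosed (M : Set E)) :
    sasaki K M = (K ⊓ M) ⊔ (Kᗮ ⊓ M) ⊔ (Kᗮ ⊓ Mᗮ) ⊔ (Kᗮ ⊓ (com K M)ᗮ) :=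
  stmt9_general K M hM
end

section
/- Let K₁, K₂, N be closed subspaces of a complex Hilbert space E such that P_{K₁} commutes with P_N and P_{K₂} commutes with P_N. Then (K₁ ⇒ K₂) ⊓ N = ((K₁ ⊓ N) ⇒ (K₂ ⊓ N)) ⊓ N. -/
/-!
An element `x` lies in `K ⇒ M` exactly when `P_K x ∈ M`. If `P_K` commutes with `P_N`, then `P_K`
maps `N` into itself, and on `N` it agrees with `P_{K ⊓ N}`. Hence for `x ∈ N` both sides of the
identity say `P_{K₁} x ∈ K₂`.
-/

variable {E : Type*} [NormedAddCommGroup E] [InnerProductSpace ℂ E] [CompleteSpace E]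

section proj

variable {K N : Submodule ℂ E} {x : E}

lemma proj_apply_mem (hK : IsClosed (K : Set E)) (x : E) : proj K x ∈ K :=
  K.topologicalClosure_minimal le_rfl hK
    (K.topologicalClosure.orthogonalProjectionOnto x).2

lemma sub_proj_apply_mem_orthogonal (x : E) : x - proj K x ∈ Kᗮ :=
  Submodule.orthogonal_le K.le_topologicalClosure
    (Submodule.sub_starProjection_mem_orthogonal x)

lemma proj_apply_of_mem (hx : x ∈ K) : proj K x = x :=
  Submodule.starProjection_eq_self_iff.2 (K.le_topologicalClosure hx)

lemma proj_apply_eq_of_mem_of_sub_mem_orthogonal (hK : IsClosed (K : Set E)) {v : E}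
    (hv : v ∈ K) (hxv : x - v ∈ Kᗮ) : proj K x = v :=
  Submodule.eq_starProjection_of_mem_orthogonal (K.le_topologicalClosure hv)
    (by rwa [hK.submodule_topologicalClosure_eq])

lemma proj_apply_of_mem_orthogonal (hK : IsClosed (K : Set E)) (hx : x ∈ Kᗮ) :
    proj K x = 0 :=
  proj_apply_eq_of_mem_of_sub_mem_orthogonal hK K.zero_mem (by rwa [sub_zero])

lemma mem_sasaki_iff (hK : IsClosed (K : Set E)) (M : Submodule ℂ E) :
    x ∈ sasaki K M ↔ proj K x ∈ M := by
  constructor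
  · intro hx
    obtain ⟨a, ha, b, hb, rfl⟩ := Submodule.mem_sup.mp hx
    rw [map_add, proj_apply_of_mem_orthogonal hK ha, proj_apply_of_mem hb.1, zero_add]
    exact hb.2
  · intro hx
    rw [← sub_add_cancel x (proj K x)]
    exact Submodule.add_mem_sup (sub_proj_apply_mem_orthogonal x) ⟨proj_apply_mem hK x, hx⟩

lemma proj_apply_mem_of_comp_comm (hN : IsClosed (N : Set E))
    (h : proj K ∘L proj N = proj N ∘L proj K) (hx : x ∈ N) : proj K x ∈ N := by
  have hx' : proj K (proj N x) = proj N (proj K x) := congr($h x)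
  rw [proj_apply_of_mem hx] at hx'
  exact hx' ▸ proj_apply_mem hN _

lemma proj_inf_apply_of_comp_comm (hK : IsClosed (K : Set E)) (hN : IsClosed (N : Set E))
    (h : proj K ∘L proj N = proj N ∘L proj K) (hx : x ∈ N) : proj (K ⊓ N) x = proj K x :=
  proj_apply_eq_of_mem_of_sub_mem_orthogonal (hK.inter hN)
    ⟨proj_apply_mem hK x, proj_apply_mem_of_comp_comm hN h hx⟩
    (Submodule.orthogonal_le inf_le_left (sub_proj_apply_mem_orthogonal x))

end proj

theorem stmt13_general (K₁ K₂ N : Submodule ℂ E)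
    (hK₁ : IsClosed (K₁ : Set E)) (hN : IsClosed (N : Set E))
    (h₁ : proj K₁ ∘L proj N = proj N ∘L proj K₁) :
    sasaki K₁ K₂ ⊓ N = sasaki (K₁ ⊓ N) (K₂ ⊓ N) ⊓ N := by
  ext x
  rw [Submodule.mem_inf, Submodule.mem_inf, mem_sasaki_iff hK₁,
    mem_sasaki_iff (K := K₁ ⊓ N) (hK₁.inter hN)]
  refine and_congr_left fun hx => ?_
  rw [proj_inf_apply_of_comp_comm hK₁ hN h₁ hx, Submodule.mem_inf,
    and_iff_left (proj_apply_mem_of_comp_comm hN h₁ hx)]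

theorem stmt13 (K₁ K₂ N : Submodule ℂ E)
    (hK₁ : IsClosed (K₁ : Set E)) (hK₂ : IsClosed (K₂ : Set E)) (hN : IsClosed (N : Set E))
    (h₁ : proj K₁ ∘L proj N = proj N ∘L proj K₁)
    (h₂ : proj K₂ ∘L proj N = proj N ∘L proj K₂) :
    sasaki K₁ K₂ ⊓ N = sasaki (K₁ ⊓ N) (K₂ ⊓ N) ⊓ N :=
  stmt13_general K₁ K₂ N hK₁ hN h₁
end
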